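/- arXiv:hep-th/0604116 — 3 statements merged into one kernel-verified Lean document; each statement's English description precedes it below -/
import Mathlib

section
/- Let R be a Rota–Baxter operator of nonzero weight θ on an associative K-algebra A (char K = 0). Then for all a₁, …, aₙ ∈ A, a₁ *_R a₂ *_R ⋯ *_R aₙ = (1/θ)(∏ᵢ R(aᵢ) - (-1)ⁿ ∏ᵢ R̃(aᵢ)), where *_R is the double product and R̃ = θ·id - R (products taken in order). -/
/-- The double Rota–Baxter product `x *_R y := x R(y) + R(x) y - θ x y`. -/
def dprod {K A : Type*} [Field K] [Ring A] [Algebra K A]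
    (θ : K) (R : A →ₗ[K] A) (x y : A) : A :=
  x * R y + R x * y - θ • (x * y)

/-- The nested (right-associated) product `a *_R b₁ *_R ⋯ *_R bₙ`. -/
def nestD {A : Type*} (f : A → A → A) : A → List A → A
  | a, [] => a
  | a, b :: l => f a (nestD f b l)

/-! The identity `θ (x *_R y) = R(x) R(y) - R̃(x) R̃(y)` holds in any algebra. Combined with the
Rota–Baxter equation `R(x *_R y) = R(x) R(y)` it gives `R̃(x *_R y) = -R̃(x) R̃(y)`, so along a nested
product `R` and `R̃` multiply out (the latter with a sign per factor), and `θ w = R(w) + R̃(w)`. -/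

section DoubleProduct

variable {K A : Type*} [Field K] [Ring A] [Algebra K A] (θ : K) (R : A →ₗ[K] A)

theorem smul_dprod (x y : A) :
    θ • dprod θ R x y = R x * R y - (θ • x - R x) * (θ • y - R y) := by
  simp only [dprod, smul_sub, smul_add, sub_mul, mul_sub, smul_mul_assoc, mul_smul_comm,
    smul_smul]
  abel

variable {θ R}
variable (hRB : ∀ x y : A, R x * R y = R (R x * y + x * R y - θ • (x * y)))
include hRB

theorem map_dprod (x y : A) : R (dprod θ R x y) = R x * R y := by
  rw [hRB, dprod, add_comm (x * R y)]

theorem smul_dprod_sub_map_dprod (x y : A) :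
    θ • dprod θ R x y - R (dprod θ R x y) = -((θ • x - R x) * (θ • y - R y)) := by
  rw [smul_dprod, map_dprod hRB]
  abel

theorem map_nestD (a : A) (l : List A) :
    R (nestD (dprod θ R) a l) = R a * (l.map R).prod := by
  induction l generalizing a with
  | nil => simp [nestD]
  | cons b l ih => rw [nestD, map_dprod hRB, ih, List.map_cons, List.prod_cons]

theorem smul_nestD_sub_map_nestD (a : A) (l : List A) :
    θ • nestD (dprod θ R) a l - R (nestD (dprod θ R) a l)
      = (-1 : K) ^ l.length • ((θ • a - R a) * (l.map fun x => θ • x - R x).prod) := by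
  induction l generalizing a with
  | nil => simp [nestD]
  | cons b l ih =>
    rw [nestD, smul_dprod_sub_map_dprod hRB, ih, List.map_cons, List.prod_cons,
      List.length_cons, mul_smul_comm, pow_succ', mul_smul, neg_one_smul]

theorem smul_nestD (a : A) (l : List A) :
    θ • nestD (dprod θ R) a l
      = ((a :: l).map R).prod
        - (-1 : K) ^ (l.length + 1) • ((a :: l).map fun x => θ • x - R x).prod := by
  have hsplit : θ • nestD (dprod θ R) a l = R (nestD (dprod θ R) a l)
      + (θ • nestD (dprod θ R) a l - R (nestD (dprod θ R) a l)) := by abel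
  rw [hsplit, smul_nestD_sub_map_nestD hRB, map_nestD hRB, List.map_cons, List.map_cons,
    List.prod_cons, List.prod_cons, pow_succ', mul_smul, neg_one_smul, sub_neg_eq_add]

end DoubleProduct

theorem stmt_5_general {K A : Type*} [Field K] [Ring A] [Algebra K A]
    (θ : K) (hθ : θ ≠ 0) (R : A →ₗ[K] A)
    (hRB : ∀ x y : A, R x * R y = R (R x * y + x * R y - θ • (x * y)))
    (n : ℕ) (a : Fin (n + 1) → A) :
    nestD (dprod θ R) (a 0) (List.ofFn fun i : Fin n => a i.succ)
      = θ⁻¹ • ((List.ofFn fun i : Fin (n + 1) => R (a i)).prod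
          - (-1 : K) ^ (n + 1) • (List.ofFn fun i : Fin (n + 1) => θ • a i - R (a i)).prod) := by
  have hofFn (f : A → A) : (List.ofFn fun i : Fin (n + 1) => f (a i))
      = (a 0 :: List.ofFn fun i : Fin n => a i.succ).map f := by
    simp [List.ofFn_succ, List.map_ofFn, Function.comp_def]
  rw [eq_inv_smul_iff₀ hθ, smul_nestD hRB, hofFn R, hofFn (fun x => θ • x - R x),
    List.length_ofFn]

/-- `a₁ *_R ⋯ *_R aₙ = θ⁻¹ (∏ R(aᵢ) - (-1)ⁿ ∏ R̃(aᵢ))` for a Rota–Baxter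
operator `R` of nonzero weight `θ`, `R̃ = θ·id - R`. -/
theorem stmt_5 {K A : Type*} [Field K] [CharZero K] [Ring A] [Algebra K A]
    (θ : K) (hθ : θ ≠ 0) (R : A →ₗ[K] A)
    (hRB : ∀ x y : A, R x * R y = R (R x * y + x * R y - θ • (x * y)))
    (n : ℕ) (a : Fin (n + 1) → A) :
    nestD (dprod θ R) (a 0) (List.ofFn fun i : Fin n => a i.succ)
      = θ⁻¹ • ((List.ofFn fun i : Fin (n + 1) => R (a i)).prod
          - (-1 : K) ^ (n + 1) • (List.ofFn fun i : Fin (n + 1) => θ • a i - R (a i)).prod) :=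
  stmt_5_general θ hθ R hRB n a
end

section
/- (Atkinson's theorem) Let (𝒜, R) be a complete filtered associative unital Rota–Baxter algebra of weight θ with filtration-preserving R, and let a ∈ 𝒜₁ (the first filtration level). If X, Y ∈ 𝒜 satisfy the recursions X = 1 - R(X·a) and Y = 1 - R̃(a·Y), where R̃ = θ·id - R, then X·(1 + θa)·Y = 1; consequently 1 + θa = X⁻¹·Y⁻¹. -/
/-!
Apply the Rota–Baxter identity to `u = X a` and `v = a Y`. The recursions say `R u = 1 - X` and
`R v = Y - 1 + θ v`, and with these the argument `R u · v + u · R v - θ u v` of `R` collapses to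
`v - u`. Hence `(1 - X) R v = R v - R u`, i.e. `X R v = 1 - X`, which is `X (Y + θ a Y) = 1`.
-/

theorem mul_one_add_smul_mul_eq_one_of_rotaBaxter {K A : Type*} [CommRing K] [Ring A]
    [Algebra K A] {θ : K} {R : A →ₗ[K] A}
    (hRB : ∀ x y : A, R x * R y = R (R x * y + x * R y - θ • (x * y)))
    {a X Y : A} (hX : X = 1 - R (X * a)) (hY : Y = 1 - (θ • (a * Y) - R (a * Y))) :
    X * (1 + θ • a) * Y = 1 := by
  have hRu : R (X * a) = 1 - X := by rw [← eq_sub_iff_add_eq'.mp hX]; abel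
  have hRv : R (a * Y) = Y - 1 + θ • (a * Y) := by rw [← eq_sub_iff_add_eq.mp hY]; abel
  have hArg : R (X * a) * (a * Y) + X * a * R (a * Y) - θ • (X * a * (a * Y)) =
      a * Y - X * a := by
    rw [hRu, hRv]
    simp only [sub_mul, mul_sub, mul_add, one_mul, mul_one, mul_smul_comm, mul_assoc]
    abel
  have hXRv : X * R (a * Y) = 1 - X := by
    have h := hRB (X * a) (a * Y)
    rwa [hArg, map_sub, hRu, sub_mul, one_mul, sub_right_inj] at h
  calc X * (1 + θ • a) * Y = X * (Y + θ • (a * Y)) := by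
        rw [mul_assoc, add_mul, one_mul, smul_mul_assoc]
    _ = X * (R (a * Y) + 1) := by rw [hRv]; congr 1; abel
    _ = 1 := by rw [mul_add, hXRv, mul_one, sub_add_cancel]

theorem eq_mul_of_mul_mul_eq_one {M : Type*} [Monoid M] {x z y x' y' : M}
    (h : x * z * y = 1) (hx : x' * x = 1) (hy : y * y' = 1) : z = x' * y' :=
  calc z = x' * x * z * (y * y') := by rw [hx, hy, one_mul, mul_one]
    _ = x' * (x * z * y) * y' := by simp only [mul_assoc]
    _ = x' * y' := by rw [h, mul_one]

theorem stmt_12_general {K A : Type*} [CommRing K] [Ring A] [Algebra K A]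
    (θ : K)
    (R : A →ₗ[K] A)
    (hRB : ∀ x y : A, R x * R y = R (R x * y + x * R y - θ • (x * y)))
    (a : A)
    (X Y : A)
    (hX : X = 1 - R (X * a))
    (hY : Y = 1 - (θ • (a * Y) - R (a * Y))) :
    X * (1 + θ • a) * Y = 1
    ∧ ∀ X' Y' : A, X * X' = 1 → X' * X = 1 → Y * Y' = 1 → Y' * Y = 1 →
        1 + θ • a = X' * Y' := by
  have hXY := mul_one_add_smul_mul_eq_one_of_rotaBaxter hRB hX hY
  exact ⟨hXY, fun _ _ _ hX' hY' _ => eq_mul_of_mul_mul_eq_one hXY hX' hY'⟩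

/-- Atkinson's theorem: in a filtered unital Rota–Baxter algebra `(𝒜, R)` of
weight `θ`, if `X = 1 - R(X a)` and `Y = 1 - R̃(a Y)` with `R̃ = θ·id - R`, then
`X (1 + θ a) Y = 1`; consequently `1 + θ a = X⁻¹ Y⁻¹`. -/
theorem stmt_12 {K A : Type*} [CommRing K] [Ring A] [Algebra K A]
    (θ : K)
    (F : ℕ → Submodule K A)
    (hdec : ∀ n, F (n + 1) ≤ F n)
    (hmulF : ∀ n m, ∀ x ∈ F n, ∀ y ∈ F m, x * y ∈ F (n + m))
    (R : A →ₗ[K] A)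
    (hRB : ∀ x y : A, R x * R y = R (R x * y + x * R y - θ • (x * y)))
    (hfil : ∀ n, ∀ x ∈ F n, R x ∈ F n)
    (a : A) (ha : a ∈ F 1)
    (X Y : A)
    (hX : X = 1 - R (X * a))
    (hY : Y = 1 - (θ • (a * Y) - R (a * Y))) :
    X * (1 + θ • a) * Y = 1
    ∧ ∀ X' Y' : A, X * X' = 1 → X' * X = 1 → Y * Y' = 1 → Y' * Y = 1 →
        1 + θ • a = X' * Y' :=
  stmt_12_general θ R hRB a X Y hX hY
end

section
/- Let (𝒜, R) be a complete filtered associative unital Rota–Baxter algebra of weight 0 (so R(x)R(y) = R(R(x)y + xR(y))) with filtration-preserving R. If X = 1 - R(X·a) and Y = 1 + R(a·Y) for a ∈ 𝒜₁, then X·Y = 1. -/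
/-!
Write `u = R (X a) = 1 - X` and `v = R (a Y) = Y - 1`. The weight-zero Rota–Baxter identity gives
`u v = R (u a Y + X a v) = R ((1 - X) a Y + X a (Y - 1)) = R (a Y - X a) = v - u`,
so `X Y = (1 - u) (1 + v) = 1 + v - u - u v = 1`.
-/

section RotaBaxterWeightZero

variable {A G : Type*} [Ring A] [FunLike G A A] [AddMonoidHomClass G A A]

theorem rotaBaxter_mul_of_fixedPoints (R : G)
    (hRB : ∀ x y : A, R x * R y = R (R x * y + x * R y)) {a X Y : A}
    (hX : X = 1 - R (X * a)) (hY : Y = 1 + R (a * Y)) :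
    R (X * a) * R (a * Y) = R (a * Y) - R (X * a) := by
  have hu : R (X * a) = 1 - X := by nth_rw 2 [hX]; rw [sub_sub_cancel]
  have hv : R (a * Y) = Y - 1 := by nth_rw 2 [hY]; rw [add_sub_cancel_left]
  have harg : R (X * a) * (a * Y) + X * a * R (a * Y) = a * Y - X * a := by
    rw [hu, hv]; noncomm_ring
  rw [hRB, harg, map_sub]

theorem mul_eq_one_of_rotaBaxter_fixedPoints (R : G)
    (hRB : ∀ x y : A, R x * R y = R (R x * y + x * R y)) {a X Y : A}
    (hX : X = 1 - R (X * a)) (hY : Y = 1 + R (a * Y)) :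
    X * Y = 1 := by
  have key := rotaBaxter_mul_of_fixedPoints R hRB hX hY
  calc X * Y = (1 - R (X * a)) * (1 + R (a * Y)) := by rw [← hX, ← hY]
    _ = 1 + R (a * Y) - R (X * a) - R (X * a) * R (a * Y) := by noncomm_ring
    _ = 1 := by rw [key]; abel

end RotaBaxterWeightZero

theorem stmt_13_general {K A : Type*} [CommRing K] [Ring A] [Algebra K A]
    (R : A →ₗ[K] A)
    (hRB : ∀ x y : A, R x * R y = R (R x * y + x * R y))
    (a : A)
    (X Y : A)
    (hX : X = 1 - R (X * a))
    (hY : Y = 1 + R (a * Y)) :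
    X * Y = 1 :=
  mul_eq_one_of_rotaBaxter_fixedPoints R hRB hX hY

/-- Atkinson's factorization in weight zero: if `R` is a weight-zero Rota–Baxter
operator on a filtered algebra and `X = 1 - R(X a)`, `Y = 1 + R(a Y)`, then `X Y = 1`. -/
theorem stmt_13 {K A : Type*} [CommRing K] [Ring A] [Algebra K A]
    (F : ℕ → Submodule K A)
    (hdec : ∀ n, F (n + 1) ≤ F n)
    (hmulF : ∀ n m, ∀ x ∈ F n, ∀ y ∈ F m, x * y ∈ F (n + m))
    (R : A →ₗ[K] A)
    (hRB : ∀ x y : A, R x * R y = R (R x * y + x * R y))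
    (hfil : ∀ n, ∀ x ∈ F n, R x ∈ F n)
    (a : A) (ha : a ∈ F 1)
    (X Y : A)
    (hX : X = 1 - R (X * a))
    (hY : Y = 1 + R (a * Y)) :
    X * Y = 1 :=
  stmt_13_general R hRB a X Y hX hY
end
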